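/- arXiv:2009.01813 — 2 statements merged into one kernel-verified Lean document; each statement's English description precedes it below -/
import Mathlib

section
/- For every seminormed ring A the topological spectrum TopSpec(A) is a sober topological space: every nonempty irreducible closed subset of TopSpec(A) has a unique generic point. -/
open Filter Topology

/-- A bounded power-multiplicative (nonarchimedean, submultiplicative) ring seminorm
on a seminormed commutative ring. -/
structure IsBddPowMulSeminorm {A : Type*} [SeminormedCommRing A] (φ : A → ℝ) : Prop where
  nonneg : ∀ f, 0 ≤ φ f
  map_zero : φ 0 = 0
  map_one : φ 1 = 1
  map_neg : ∀ f, φ (-f) = φ f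
  nonarch : ∀ f g, φ (f + g) ≤ max (φ f) (φ g)
  submul : ∀ f g, φ (f * g) ≤ φ f * φ g
  pow_mul : ∀ f, ∀ n : ℕ, 1 ≤ n → φ (f ^ n) = φ f ^ n
  bounded : ∃ C > 0, ∀ f, φ f ≤ C * ‖f‖

/-- An ideal is spectrally reduced if it is the kernel of some bounded
power-multiplicative seminorm. -/
def IsSpectrallyReduced {A : Type*} [SeminormedCommRing A] (I : Ideal A) : Prop :=
  ∃ φ : A → ℝ, IsBddPowMulSeminorm φ ∧ ∀ f, f ∈ I ↔ φ f = 0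

/-- The topological spectrum: the subspace of `Spec A` consisting of the spectrally
reduced prime ideals, with the topology induced from the Zariski topology. -/
abbrev TopSpec (A : Type*) [SeminormedCommRing A] : Type _ :=
  {p : PrimeSpectrum A // IsSpectrallyReduced p.asIdeal}

/-!
The spectrally reduced primes form a subspace of the sober space `Spec A`, so it suffices that
the generic point of (the closure of) an irreducible set `T` of spectrally reduced primes, namely
the prime `⋂_{p ∈ T} p`, is again spectrally reduced. It is the kernel of the pointwise supremum
of seminorms `φ_p` with kernels `p ∈ T`; this supremum is finite because every bounded
power-multiplicative seminorm is dominated by the norm, and it stays power-multiplicative.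
-/

open PrimeSpectrum

theorem quasiSober_of_forall_isGenericPoint {X : Type*} [TopologicalSpace X] {S : Set X}
    (hS : ∀ T ⊆ S, IsIrreducible T → ∃ x ∈ S, IsGenericPoint x (closure T)) : QuasiSober S where
  sober {Z} hZi hZc := by
    obtain ⟨x, hxS, hx⟩ := hS _ (Subtype.coe_image_subset S Z)
      (hZi.image _ continuous_subtype_val.continuousOn)
    refine ⟨⟨x, hxS⟩, ?_⟩
    rw [IsGenericPoint, IsEmbedding.subtypeVal.closure_eq_preimage_closure_image,
      Set.image_singleton, hx.def, ← IsEmbedding.subtypeVal.closure_eq_preimage_closure_image,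
      hZc.closure_eq]

namespace IsBddPowMulSeminorm

variable {A : Type*} [SeminormedCommRing A]

/-- Otherwise `(φ f / ‖f‖) ^ n = φ (f ^ n) / ‖f‖ ^ n ≤ C` for all `n` although `φ f / ‖f‖ > 1`. -/
theorem le_norm {φ : A → ℝ} (h : IsBddPowMulSeminorm φ) (f : A) : φ f ≤ ‖f‖ := by
  obtain ⟨C, hC, hCb⟩ := h.bounded
  rcases (norm_nonneg f).eq_or_lt with hf | hf
  · simpa [← hf] using hCb f
  by_contra! hlt
  obtain ⟨n, hn⟩ := pow_unbounded_of_one_lt C ((one_lt_div hf).mpr hlt)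
  have hpow : φ f ^ (n + 1) ≤ C * ‖f‖ ^ (n + 1) :=
    calc φ f ^ (n + 1) = φ (f ^ (n + 1)) := (h.pow_mul f (n + 1) (Nat.le_add_left 1 n)).symm
      _ ≤ C * ‖f ^ (n + 1)‖ := hCb _
      _ ≤ C * ‖f‖ ^ (n + 1) := by gcongr; exact norm_pow_le' f n.succ_pos
  have hratio : (φ f / ‖f‖) ^ (n + 1) ≤ C := by
    rwa [div_pow, div_le_iff₀ (pow_pos hf _)]
  have := pow_le_pow_right₀ ((one_lt_div hf).mpr hlt).le (Nat.le_add_right n 1)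
  linarith

theorem iSup {ι : Type*} [Nonempty ι] {φ : ι → A → ℝ} (h : ∀ i, IsBddPowMulSeminorm (φ i)) :
    IsBddPowMulSeminorm fun f => ⨆ i, φ i f := by
  have hbdd (f : A) : BddAbove (Set.range fun i => φ i f) :=
    ⟨‖f‖, by rintro _ ⟨i, rfl⟩; exact (h i).le_norm f⟩
  have hle (i : ι) (f : A) : φ i f ≤ ⨆ i, φ i f := le_ciSup (hbdd f) i
  have hnonneg (f : A) : 0 ≤ ⨆ i, φ i f := ((h (Classical.arbitrary ι)).nonneg f).trans (hle _ f)
  refine ⟨hnonneg, ?_, ?_, ?_, ?_, ?_, ?_, ?_⟩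
  · simp [(h _).map_zero]
  · simp [(h _).map_one]
  · simp [(h _).map_neg]
  · exact fun f g => ciSup_le fun i =>
      ((h i).nonarch f g).trans (max_le_max (hle i f) (hle i g))
  · exact fun f g => ciSup_le fun i =>
      ((h i).submul f g).trans (mul_le_mul (hle i f) (hle i g) ((h i).nonneg g) (hnonneg f))
  · intro f n hn
    have hn0 : n ≠ 0 := Nat.one_le_iff_ne_zero.mp hn
    refine le_antisymm (ciSup_le fun i => ?_) ?_
    · rw [(h i).pow_mul f n hn]
      exact pow_le_pow_left₀ ((h i).nonneg f) (hle i f) n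
    · have hroot : ⨆ i, φ i f ≤ (⨆ i, φ i (f ^ n)) ^ (n : ℝ)⁻¹ := ciSup_le fun i => by
        rw [← Real.pow_rpow_inv_natCast ((h i).nonneg f) hn0, ← (h i).pow_mul f n hn]
        exact Real.rpow_le_rpow ((h i).nonneg _) (hle i _) (by positivity)
      calc (⨆ i, φ i f) ^ n ≤ ((⨆ i, φ i (f ^ n)) ^ (n : ℝ)⁻¹) ^ n := by gcongr; exact hnonneg f
        _ = ⨆ i, φ i (f ^ n) := Real.rpow_inv_natCast_pow (hnonneg _) hn0
  · exact ⟨1, one_pos, fun f => by simpa using ciSup_le fun i => (h i).le_norm f⟩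

end IsBddPowMulSeminorm

theorem IsSpectrallyReduced.iInf {A ι : Type*} [SeminormedCommRing A] [Nonempty ι]
    {I : ι → Ideal A} (h : ∀ i, IsSpectrallyReduced (I i)) : IsSpectrallyReduced (⨅ i, I i) := by
  choose φ hφ hker using h
  refine ⟨fun f => ⨆ i, φ i f, IsBddPowMulSeminorm.iSup hφ, fun f => ?_⟩
  rw [Submodule.mem_iInf]
  constructor
  · intro hf
    simp [(hker _ f).mp (hf _)]
  · intro hf i
    refine (hker i f).mpr (le_antisymm ?_ ((hφ i).nonneg f))
    exact hf ▸ le_ciSup ⟨‖f‖, by rintro _ ⟨j, rfl⟩; exact (hφ j).le_norm f⟩ i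

theorem isSpectrallyReduced_vanishingIdeal {A : Type*} [SeminormedCommRing A]
    {T : Set (PrimeSpectrum A)} (hT : T.Nonempty) (h : ∀ p ∈ T, IsSpectrallyReduced p.asIdeal) :
    IsSpectrallyReduced (vanishingIdeal T) := by
  have : Nonempty T := hT.to_subtype
  have hinf : vanishingIdeal T = ⨅ p : T, p.1.asIdeal := by
    ext f
    simp [mem_vanishingIdeal, Submodule.mem_iInf]
  exact hinf ▸ IsSpectrallyReduced.iInf fun p : T => h p p.2

instance TopSpec.quasiSober (A : Type*) [SeminormedCommRing A] : QuasiSober (TopSpec A) :=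
  quasiSober_of_forall_isGenericPoint fun T hTS hT =>
    ⟨⟨vanishingIdeal T, isIrreducible_iff_vanishingIdeal_isPrime.mp hT⟩,
      isSpectrallyReduced_vanishingIdeal hT.nonempty hTS,
      by rw [IsGenericPoint, PrimeSpectrum.closure_singleton, zeroLocus_vanishingIdeal_eq_closure]⟩

theorem topSpec_sober_general {A : Type*} [SeminormedCommRing A] :
    ∀ Z : Set (TopSpec A), IsClosed Z → IsIrreducible Z →
      ∃! p : TopSpec A, closure ({p} : Set (TopSpec A)) = Z := by
  intro Z hZc hZi
  obtain ⟨p, hp⟩ := QuasiSober.sober hZi hZc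
  exact ⟨p, hp, fun q hq => IsGenericPoint.eq hq hp⟩

/-- The topological spectrum of a seminormed ring is sober: every nonempty irreducible
closed subset has a unique generic point. -/
theorem topSpec_sober {A : Type*} [SeminormedCommRing A] [NormOneClass A]
    (hA : IsNonarchimedean (fun a : A => ‖a‖)) :
    ∀ Z : Set (TopSpec A), IsClosed Z → IsIrreducible Z →
      ∃! p : TopSpec A, closure ({p} : Set (TopSpec A)) = Z :=
  topSpec_sober_general
end

section
/- Let K be a nonarchimedean field. Let B be a normed K-algebra whose spectral seminorm satisfies |x|_spc^B = τ_B(x) for all x ∈ B, where τ_B(x) := sup{ |λ| : λ ∈ K and x − λ·1 is not invertible in B } ∪ {0}. Let A be a Zariskian normed K-algebra with spectral seminorm |·|_spc^A. Then every K-algebra homomorphism φ : A → B satisfies |φ(x)|_spc^B ≤ |x|_spc^A for all x ∈ A. -/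
open Filter Topology

/-- The spectral seminorm `|x|_spc = inf_{n ≥ 1} ‖x^n‖^{1/n}` of a seminormed ring. -/
noncomputable def spcSeminorm {A : Type*} [SeminormedRing A] (x : A) : ℝ :=
  ⨅ n : ℕ, ‖x ^ (n + 1)‖ ^ (((n : ℝ) + 1)⁻¹)

/-- `τ(x)`: the supremum in `[0,∞]` of the absolute values of the scalars `λ` such that
`x - λ·1` is not invertible, together with `0`. -/
noncomputable def tauSpec (K : Type*) {A : Type*} [NontriviallyNormedField K]
    [NormedCommRing A] [NormedAlgebra K A] (x : A) : ENNReal :=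
  sSup (insert 0
    {r : ENNReal | ∃ lam : K, ¬ IsUnit (x - algebraMap K A lam) ∧ r = ENNReal.ofReal ‖lam‖})

/-!
If `|λ| > |x|_spc`, then `y = λ⁻¹ x` has `‖y^m‖ < 1` for some `m`, so `y^m` is
topologically nilpotent and `1 - y^m = (1 + y + ⋯ + y^(m-1)) (1 - y)` is a unit in the Zariskian
ring `A`. Hence `x - λ` is a unit in `A`, and so is its image `φ x - λ` in `B`. Every `λ` counted
by `τ_B(φ x)` therefore has `|λ| ≤ |x|_spc`, and `|φ x|_spc = τ_B(φ x)` by assumption.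
-/

def IsZariskian (A : Type*) [SeminormedRing A] : Prop :=
  ∀ x : A, Tendsto (fun n : ℕ => x ^ n) atTop (𝓝 0) → IsUnit (1 + x)

section SpectralSeminorm

variable {A : Type*} [SeminormedRing A]

lemma spcSeminorm_nonneg (x : A) : 0 ≤ spcSeminorm x :=
  Real.iInf_nonneg fun _ => Real.rpow_nonneg (norm_nonneg _) _

lemma exists_norm_pow_lt_of_spcSeminorm_lt {x : A} {r : ℝ} (h : spcSeminorm x < r) :
    ∃ m : ℕ, ‖x ^ m‖ < r ^ m := by
  obtain ⟨n, hn⟩ := exists_lt_of_ciInf_lt h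
  refine ⟨n + 1, ?_⟩
  rw [← Nat.cast_succ] at hn
  calc ‖x ^ (n + 1)‖ = (‖x ^ (n + 1)‖ ^ ((n + 1 : ℕ) : ℝ)⁻¹) ^ (n + 1) :=
        (Real.rpow_inv_natCast_pow (norm_nonneg _) n.succ_ne_zero).symm
    _ < r ^ (n + 1) := pow_lt_pow_left₀ hn (Real.rpow_nonneg (norm_nonneg _) _) n.succ_ne_zero

lemma spcSeminorm_smul {K : Type*} [NormedField K] [NormedAlgebra K A] (c : K) (x : A) :
    spcSeminorm (c • x) = ‖c‖ * spcSeminorm x := by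
  simp only [spcSeminorm, Real.mul_iInf_of_nonneg (norm_nonneg c), smul_pow, norm_smul,
    norm_pow]
  congr 1 with n
  rw [Real.mul_rpow (by positivity) (norm_nonneg _), ← Nat.cast_succ,
    Real.pow_rpow_inv_natCast (norm_nonneg c) n.succ_ne_zero]

end SpectralSeminorm

lemma isUnit_one_sub_of_isUnit_one_sub_pow {R : Type*} [Ring R] {y : R} {m : ℕ}
    (h : IsUnit (1 - y ^ m)) : IsUnit (1 - y) := by
  have hcomm : Commute (∑ i ∈ Finset.range m, y ^ i) (1 - y) :=
    Commute.sum_left _ _ _ fun i _ => ((Commute.one_right _).sub_right (Commute.pow_self y i))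
  rw [← geom_sum_mul_neg] at h
  exact (hcomm.isUnit_mul_iff.1 h).2

namespace IsZariskian

variable {A : Type*} [SeminormedRing A] (hA : IsZariskian A)
include hA

lemma isUnit_one_sub_of_norm_lt_one {y : A} (hy : ‖y‖ < 1) : IsUnit (1 - y) := by
  simpa [sub_eq_add_neg] using
    hA (-y) (tendsto_pow_atTop_nhds_zero_of_norm_lt_one (by rwa [norm_neg]))

lemma isUnit_one_sub_of_spcSeminorm_lt_one {y : A} (hy : spcSeminorm y < 1) :
    IsUnit (1 - y) := by
  obtain ⟨m, hm⟩ := exists_norm_pow_lt_of_spcSeminorm_lt hy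
  exact isUnit_one_sub_of_isUnit_one_sub_pow
    (hA.isUnit_one_sub_of_norm_lt_one (by rwa [one_pow] at hm))

lemma isUnit_sub_algebraMap_of_spcSeminorm_lt {K : Type*} [NormedField K] [NormedAlgebra K A]
    {x : A} {lam : K} (h : spcSeminorm x < ‖lam‖) :
    IsUnit (x - algebraMap K A lam) := by
  have hlam : lam ≠ 0 := norm_pos_iff.1 ((spcSeminorm_nonneg x).trans_lt h)
  have hsmul : spcSeminorm (lam⁻¹ • x) < 1 := by
    rwa [spcSeminorm_smul, norm_inv, inv_mul_lt_one₀ (norm_pos_iff.2 hlam)]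
  have hfactor : x - algebraMap K A lam = algebraMap K A (-lam) * (1 - lam⁻¹ • x) := by
    rw [mul_sub, mul_one, ← Algebra.smul_def, smul_smul, neg_mul, mul_inv_cancel₀ hlam,
      neg_one_smul, map_neg, sub_neg_eq_add, neg_add_eq_sub]
  rw [hfactor]
  exact ((IsUnit.mk0 _ (neg_ne_zero.2 hlam)).map (algebraMap K A)).mul
    (hA.isUnit_one_sub_of_spcSeminorm_lt_one hsmul)

lemma tauSpec_map_le {K : Type*} [NontriviallyNormedField K] [NormedAlgebra K A]
    {B : Type*} [NormedCommRing B] [NormedAlgebra K B] (φ : A →ₐ[K] B) (x : A) :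
    tauSpec K (φ x) ≤ ENNReal.ofReal (spcSeminorm x) := by
  refine sSup_le ?_
  rintro r (rfl | ⟨lam, hnotunit, rfl⟩)
  · exact zero_le
  refine ENNReal.ofReal_le_ofReal (not_lt.1 fun hlt => hnotunit ?_)
  simpa using (hA.isUnit_sub_algebraMap_of_spcSeminorm_lt hlt).map φ

end IsZariskian

theorem spectral_seminorm_automatic_continuity_general {K A B : Type*}
    [NontriviallyNormedField K]
    [NormedCommRing A] [NormedAlgebra K A]
    [NormedCommRing B] [NormedAlgebra K B]
    (hBspec : ∀ x : B, ENNReal.ofReal (spcSeminorm x) = tauSpec K x)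
    (hAzar : ∀ x : A, Tendsto (fun n : ℕ => x ^ n) atTop (nhds 0) → IsUnit (1 + x))
    (φ : A →ₐ[K] B) :
    ∀ x : A, spcSeminorm (φ x) ≤ spcSeminorm x := by
  intro x
  rw [← ENNReal.ofReal_le_ofReal_iff (spcSeminorm_nonneg x), hBspec]
  exact IsZariskian.tauSpec_map_le hAzar φ x

/-- If the spectral seminorm of a normed `K`-algebra `B` coincides with `τ_B`, then every
`K`-algebra homomorphism from a Zariskian normed `K`-algebra `A` to `B` contracts spectral
seminorms. -/
theorem spectral_seminorm_automatic_continuity {K A B : Type*}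
    [NontriviallyNormedField K] [CompleteSpace K]
    (hK : IsNonarchimedean (fun x : K => ‖x‖))
    [NormedCommRing A] [NormOneClass A] [NormedAlgebra K A]
    (hA : IsNonarchimedean (fun a : A => ‖a‖))
    [NormedCommRing B] [NormOneClass B] [NormedAlgebra K B]
    (hB : IsNonarchimedean (fun b : B => ‖b‖))
    (hBspec : ∀ x : B, ENNReal.ofReal (spcSeminorm x) = tauSpec K x)
    (hAzar : ∀ x : A, Tendsto (fun n : ℕ => x ^ n) atTop (nhds 0) → IsUnit (1 + x))
    (φ : A →ₐ[K] B) :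
    ∀ x : A, spcSeminorm (φ x) ≤ spcSeminorm x :=
  spectral_seminorm_automatic_continuity_general hBspec hAzar φ
end
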